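/- arXiv:1205.2854 — 4 statements merged into one kernel-verified Lean document; each statement's English description precedes it below -/
import Mathlib

section
/- For all positive integers α, β and every nonnegative integer l, the higher-order q-Genocchi polynomials satisfy the convolution identity G_{l,q}^{(α+β)}(x) = Σ_{n=0}^{l} binom(l,n)_q · G_{n,q}^{(α)} · G_{l-n,q}^{(β)}(x), where G_{n,q}^{(α)} = G_{n,q}^{(α)}(0). -/
open PowerSeries Finset

/-- The `q`-number `[n]_q = (1 - q^n)/(1 - q)`. -/
noncomputable def qNum (q : ℂ) (n : ℕ) : ℂ := (1 - q ^ n) / (1 - q)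

/-- The `q`-factorial `[n]_q! = [n]_q [n-1]_q ⋯ [1]_q`, with `[0]_q! = 1`. -/
noncomputable def qFact (q : ℂ) : ℕ → ℂ
  | 0 => 1
  | n + 1 => qNum q (n + 1) * qFact q n

/-- The Gaussian `q`-binomial coefficient `[n]_q! / ([k]_q! [n-k]_q!)`. -/
noncomputable def qBinom (q : ℂ) (n k : ℕ) : ℂ :=
  qFact q n / (qFact q k * qFact q (n - k))

/-- `e_q(zx)` as a formal power series in `z`: `∑ x^l z^l / [l]_q!`. -/
noncomputable def qExpGF (q x : ℂ) : PowerSeries ℂ :=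
  PowerSeries.mk fun l => x ^ l / qFact q l

/-- The generating function `([2]_q z / (e_q(z)+1))^α e_q(zx)` of the
higher-order `q`-Genocchi polynomials, as a formal power series in `z`. -/
noncomputable def qGenocchiGF (q : ℂ) (α : ℕ) (x : ℂ) : PowerSeries ℂ :=
  (PowerSeries.C (qNum q 2) * PowerSeries.X * (qExpGF q 1 + 1)⁻¹) ^ α * qExpGF q x

/-! The identity is the coefficientwise form of the factorisation
`GF^{(α+β)}(x) = GF^{(α)}(0) · GF^{(β)}(x)` of generating functions, which holds because
`e_q(0·z) = 1`. Coefficients are compared via `q`-exponential generating functions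
`∑ aₙ zⁿ/[n]_q!`, whose product is the `q`-binomial convolution; this needs `[n]_q! ≠ 0`,
i.e. that `q` is not a root of unity, which `‖q‖ < 1` ensures. -/

section QFactorial

variable {q : ℂ}

theorem qNum_ne_zero {n : ℕ} (hqn : q ^ n ≠ 1) : qNum q n ≠ 0 := by
  have hq : q ≠ 1 := by
    rintro rfl
    exact hqn (one_pow n)
  exact div_ne_zero (sub_ne_zero.2 (Ne.symm hqn)) (sub_ne_zero.2 (Ne.symm hq))

theorem qFact_ne_zero (hq : ¬IsOfFinOrder q) (n : ℕ) : qFact q n ≠ 0 := by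
  induction n with
  | zero => exact one_ne_zero
  | succ n ih =>
    have hqn : q ^ (n + 1) ≠ 1 := fun h =>
      hq (isOfFinOrder_iff_pow_eq_one.2 ⟨n + 1, n.succ_pos, h⟩)
    exact mul_ne_zero (qNum_ne_zero hqn) ih

end QFactorial

section QEGF

noncomputable def qEGF (q : ℂ) (a : ℕ → ℂ) : PowerSeries ℂ :=
  PowerSeries.mk fun n => a n / qFact q n

variable {q : ℂ}

theorem qEGF_injective (hq : ¬IsOfFinOrder q) : Function.Injective (qEGF q) := by
  intro a b hab
  funext n
  have hcoeff := congrArg (coeff n) hab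
  simp only [qEGF, coeff_mk] at hcoeff
  exact (div_left_inj' (qFact_ne_zero hq n)).1 hcoeff

theorem qEGF_mul (hq : ¬IsOfFinOrder q) (a b : ℕ → ℂ) :
    qEGF q a * qEGF q b =
      qEGF q fun l => ∑ n ∈ range (l + 1), qBinom q l n * a n * b (l - n) := by
  ext l
  simp only [qEGF, coeff_mul, coeff_mk, Nat.sum_antidiagonal_eq_sum_range_succ_mk, sum_div]
  refine sum_congr rfl fun n _ => ?_
  rw [qBinom]
  field_simp [qFact_ne_zero hq l, qFact_ne_zero hq n, qFact_ne_zero hq (l - n)]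

end QEGF

theorem qExpGF_zero (q : ℂ) : qExpGF q 0 = 1 := by
  ext (_ | n) <;> simp [qExpGF, qFact]

theorem qGenocchiGF_add (q : ℂ) (α β : ℕ) (x : ℂ) :
    qGenocchiGF q (α + β) x = qGenocchiGF q α 0 * qGenocchiGF q β x := by
  simp only [qGenocchiGF, qExpGF_zero, mul_one, pow_add]
  ring

theorem qGenocchi_add_order_general (q : ℂ) (hq1 : ‖q‖ < 1)
    (α β : ℕ) (hα : 0 < α) (hβ : 0 < β)
    (G : ℕ → ℕ → ℂ → ℂ)
    (hG : ∀ γ : ℕ, 0 < γ → ∀ x : ℂ,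
      PowerSeries.mk (fun n => G γ n x / qFact q n) = qGenocchiGF q γ x) :
    ∀ (l : ℕ) (x : ℂ),
      G (α + β) l x =
        ∑ n ∈ Finset.range (l + 1), qBinom q l n * G α n 0 * G β (l - n) x := by
  intro l x
  have hq : ¬IsOfFinOrder q := fun h => hq1.ne h.norm_eq_one
  have hGF : qEGF q (fun n => G (α + β) n x) =
      qEGF q (fun n => G α n 0) * qEGF q (fun n => G β n x) := by
    simp only [qEGF]
    rw [hG (α + β) (by omega), hG α hα, hG β hβ, qGenocchiGF_add]
  rw [qEGF_mul hq] at hGF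
  exact congrFun (qEGF_injective hq hGF) l

/-- For positive integers `α, β` and every nonnegative integer `l`,
`G_{l,q}^{(α+β)}(x) = ∑_{n=0}^{l} binom(l,n)_q G_{n,q}^{(α)} G_{l-n,q}^{(β)}(x)`,
where `G_{n,q}^{(γ)} = G_{n,q}^{(γ)}(0)`. Here `G γ n x` denotes the `q`-Genocchi
polynomial of order `γ`, the whole family being defined by the generating identity. -/
theorem qGenocchi_add_order (q : ℂ) (hq0 : 0 < ‖q‖) (hq1 : ‖q‖ < 1)
    (α β : ℕ) (hα : 0 < α) (hβ : 0 < β)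
    (G : ℕ → ℕ → ℂ → ℂ)
    (hG : ∀ γ : ℕ, 0 < γ → ∀ x : ℂ,
      PowerSeries.mk (fun n => G γ n x / qFact q n) = qGenocchiGF q γ x) :
    ∀ (l : ℕ) (x : ℂ),
      G (α + β) l x =
        ∑ n ∈ Finset.range (l + 1), qBinom q l n * G α n 0 * G β (l - n) x :=
  qGenocchi_add_order_general q hq1 α β hα hβ G hG
end

section
/- Let 0 < q < 1 be real. For every complex z with Re(z) > 0, the Jackson q-integral of t^{z-1} E_q(-qt) over [0,1] is given by the absolutely convergent series ∫₀¹ t^{z-1} E_q(-qt) d_q t = Σ_{j≥0} (-1)^j q^{j(j+1)/2} / ([j]_q! · [z+j]_q). -/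
open Filter Topology

/-- The `q`-number `[w]_q = (1 - q^w)/(1 - q)` of a complex number `w`,
via the principal branch `q^w = exp(w log q)`. -/
noncomputable def qNumC (q w : ℂ) : ℂ := (1 - q ^ w) / (1 - q)

/-- The (entire) `q`-exponential `E_q(w) = ∑ q^{l(l-1)/2} w^l/[l]_q!`. -/
noncomputable def qExpE (q w : ℂ) : ℂ :=
  ∑' l : ℕ, q ^ (l * (l - 1) / 2) * w ^ l / qFact q l

/-!
Expanding `E_q(-q^{l+1})` as its power series turns the Jackson sum into the double series
`(1-q) ∑_l ∑_j (-1)^j q^{j(j+1)/2}/[j]_q! · (q^{z+j})^l`. It is absolutely convergent, being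
dominated by `∑_{j,l} q^j (q^{Re z})^l`, so the two sums may be swapped; the inner sum over `l`
is then geometric and gives `(1-q)/(1-q^{z+j}) = 1/[z+j]_q`.
-/

open Complex

lemma qNum_eq_geom_sum {q : ℂ} (hq : q ≠ 1) (n : ℕ) :
    qNum q n = ∑ i ∈ Finset.range n, q ^ i := by
  rw [qNum, geom_sum_eq hq, ← neg_div_neg_eq, neg_sub, neg_sub]

lemma one_le_norm_qNum {q : ℝ} (hq0 : 0 ≤ q) (hq1 : q < 1) {n : ℕ} (hn : n ≠ 0) :
    1 ≤ ‖qNum (q : ℂ) n‖ := by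
  have hq1' : (q : ℂ) ≠ 1 := by exact_mod_cast hq1.ne
  have hsum : 1 ≤ ∑ i ∈ Finset.range n, q ^ i :=
    pow_zero q ▸ Finset.single_le_sum (fun i _ => pow_nonneg hq0 i)
      (Finset.mem_range.2 (Nat.pos_of_ne_zero hn))
  rw [qNum_eq_geom_sum hq1', show ∑ i ∈ Finset.range n, (q : ℂ) ^ i =
    ((∑ i ∈ Finset.range n, q ^ i : ℝ) : ℂ) by push_cast; rfl, norm_real,
    Real.norm_of_nonneg (hsum.trans' zero_le_one)]
  exact hsum

lemma one_le_norm_qFact {q : ℝ} (hq0 : 0 ≤ q) (hq1 : q < 1) (n : ℕ) :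
    1 ≤ ‖qFact (q : ℂ) n‖ := by
  induction n with
  | zero => simp [qFact]
  | succ n ih =>
    rw [qFact, norm_mul]
    exact one_le_mul_of_one_le_of_one_le (one_le_norm_qNum hq0 hq1 n.succ_ne_zero) ih

lemma Nat.mul_succ_div_two (j : ℕ) : j * (j + 1) / 2 = j * (j - 1) / 2 + j := by
  rcases j with _ | k
  · rfl
  · rw [show (k + 1) * (k + 1 + 1) = (k + 1) * (k + 1 - 1) + 2 * (k + 1) by rw [Nat.add_sub_cancel]; ring,
      Nat.add_mul_div_left _ _ two_pos]

lemma Complex.ofReal_pow_cpow_comm {x : ℝ} (hx : 0 ≤ x) (n : ℕ) (w : ℂ) :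
    ((x : ℂ) ^ n) ^ w = ((x : ℂ) ^ w) ^ n := by
  rw [← cpow_nat_mul' (by simp [arg_ofReal_of_nonneg hx, Real.pi_pos])
    (by simp [arg_ofReal_of_nonneg hx, Real.pi_pos.le]), cpow_nat_mul]

lemma Complex.mul_cpow_sub_one_mul_pow {a : ℂ} (ha : a ≠ 0) (w : ℂ) (n : ℕ) :
    a * a ^ (w - 1) * a ^ n = a ^ (w + n) := by
  rw [cpow_add _ _ ha, cpow_sub _ _ ha, cpow_one, cpow_natCast]
  field_simp

section GeometricDoubleSeries

variable {𝕜 : Type*} [NormedField 𝕜] {c r : ℕ → 𝕜} {ρ : ℝ}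

lemma summable_mul_geometric_prod [CompleteSpace 𝕜] (hρ : ρ < 1) (hr : ∀ j, ‖r j‖ ≤ ρ)
    (hc : Summable fun j => ‖c j‖) :
    Summable fun p : ℕ × ℕ => c p.1 * r p.1 ^ p.2 := by
  have hρ0 : 0 ≤ ρ := (norm_nonneg _).trans (hr 0)
  refine Summable.of_norm_bounded
    (hc.mul_of_nonneg (summable_geometric_of_lt_one hρ0 hρ) (fun _ => norm_nonneg _)
      (fun _ => pow_nonneg hρ0 _)) fun p => ?_
  rw [norm_mul, norm_pow]
  exact mul_le_mul_of_nonneg_left (pow_le_pow_left₀ (norm_nonneg _) (hr _) _) (norm_nonneg _)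

lemma tsum_tsum_mul_geometric [CompleteSpace 𝕜] (hρ : ρ < 1) (hr : ∀ j, ‖r j‖ ≤ ρ)
    (hc : Summable fun j => ‖c j‖) :
    ∑' l, ∑' j, c j * r j ^ l = ∑' j, c j / (1 - r j) := by
  rw [(summable_mul_geometric_prod hρ hr hc).tsum_comm (f := fun j l => c j * r j ^ l)]
  refine tsum_congr fun j => ?_
  rw [tsum_mul_left, tsum_geometric_of_norm_lt_one ((hr j).trans_lt hρ), div_eq_mul_inv]

lemma summable_norm_div_one_sub (hρ : ρ < 1) (hr : ∀ j, ‖r j‖ ≤ ρ)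
    (hc : Summable fun j => ‖c j‖) :
    Summable fun j => ‖c j / (1 - r j)‖ := by
  refine (hc.div_const (1 - ρ)).of_nonneg_of_le (fun _ => norm_nonneg _) fun j => ?_
  have hgap : 1 - ρ ≤ ‖1 - r j‖ := by
    have := norm_sub_norm_le (1 : 𝕜) (r j)
    rw [norm_one] at this
    linarith [hr j]
  rw [norm_div]
  exact div_le_div_of_nonneg_left (norm_nonneg _) (by linarith) hgap

end GeometricDoubleSeries

lemma summable_norm_qExpE_coeff {q : ℝ} (hq0 : 0 ≤ q) (hq1 : q < 1) :
    Summable fun j : ℕ => ‖(-1 : ℂ) ^ j * (q : ℂ) ^ (j * (j + 1) / 2) / qFact (q : ℂ) j‖ := by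
  refine (summable_geometric_of_lt_one hq0 hq1).of_nonneg_of_le (fun _ => norm_nonneg _)
    fun j => ?_
  have hfact := one_le_norm_qFact hq0 hq1 j
  rw [norm_div, norm_mul, norm_pow, norm_pow, norm_neg, norm_one, one_pow, one_mul,
    norm_real, Real.norm_of_nonneg hq0, div_le_iff₀ (by linarith)]
  calc q ^ (j * (j + 1) / 2) ≤ q ^ j :=
        pow_le_pow_of_le_one hq0 hq1.le (by rw [Nat.mul_succ_div_two]; omega)
    _ ≤ q ^ j * ‖qFact (q : ℂ) j‖ := le_mul_of_one_le_right (pow_nonneg hq0 _) hfact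

lemma pow_mul_cpow_mul_qExpE_eq_tsum {q : ℝ} (hq0 : 0 < q) (z : ℂ) (l : ℕ) :
    (q : ℂ) ^ l * ((q : ℂ) ^ l) ^ (z - 1) * qExpE (q : ℂ) (-(q : ℂ) * (q : ℂ) ^ l) =
      ∑' j : ℕ, (-1 : ℂ) ^ j * (q : ℂ) ^ (j * (j + 1) / 2) / qFact (q : ℂ) j *
        ((q : ℂ) ^ (z + j)) ^ l := by
  have hql : (q : ℂ) ^ l ≠ 0 := pow_ne_zero _ (ofReal_ne_zero.2 hq0.ne')
  rw [qExpE, ← tsum_mul_left]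
  refine tsum_congr fun j => ?_
  rw [← ofReal_pow_cpow_comm hq0.le, ← mul_cpow_sub_one_mul_pow hql, Nat.mul_succ_div_two,
    neg_mul, neg_pow, mul_pow]
  ring

/-- For `0 < q < 1` and `Re z > 0`, the Jackson `q`-integral
`∫₀¹ t^{z-1} E_q(-qt) d_q t = (1-q)·∑_{l≥0} q^l (q^l)^{z-1} E_q(-q·q^l)` equals the
absolutely convergent series `∑_{j≥0} (-1)^j q^{j(j+1)/2}/([j]_q! [z+j]_q)`. -/
theorem jackson_qIntegral_qExpE (q : ℝ) (hq : q ∈ Set.Ioo (0 : ℝ) 1)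
    (z : ℂ) (hz : 0 < z.re) :
    (Summable fun j : ℕ =>
      ‖(-1 : ℂ) ^ j * (q : ℂ) ^ (j * (j + 1) / 2) /
        (qFact (q : ℂ) j * qNumC (q : ℂ) (z + (j : ℂ)))‖) ∧
      (1 - (q : ℂ)) *
          ∑' l : ℕ, (q : ℂ) ^ l * (((q : ℂ) ^ l : ℂ) ^ (z - 1)) *
            qExpE (q : ℂ) (-(q : ℂ) * (q : ℂ) ^ l) =
        ∑' j : ℕ, (-1 : ℂ) ^ j * (q : ℂ) ^ (j * (j + 1) / 2) /
          (qFact (q : ℂ) j * qNumC (q : ℂ) (z + (j : ℂ))) := by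
  obtain ⟨hq0, hq1⟩ := hq
  set c : ℕ → ℂ := fun j => (-1 : ℂ) ^ j * (q : ℂ) ^ (j * (j + 1) / 2) / qFact (q : ℂ) j
  set r : ℕ → ℂ := fun j => (q : ℂ) ^ (z + j)
  have hr : ∀ j, ‖r j‖ ≤ q ^ z.re := fun j => by
    rw [norm_cpow_eq_rpow_re_of_pos hq0]
    exact Real.rpow_le_rpow_of_exponent_ge hq0 hq1.le (by simp)
  have hρ : q ^ z.re < 1 := Real.rpow_lt_one hq0.le hq1 hz
  have hc : Summable fun j => ‖c j‖ := summable_norm_qExpE_coeff hq0.le hq1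
  have hterm : ∀ j : ℕ, (1 - (q : ℂ)) * (c j / (1 - r j)) =
      (-1 : ℂ) ^ j * (q : ℂ) ^ (j * (j + 1) / 2) /
        (qFact (q : ℂ) j * qNumC (q : ℂ) (z + (j : ℂ))) := fun j => by
    rw [qNumC, div_mul_eq_div_div, div_div_eq_mul_div]
    ring
  refine ⟨?_, ?_⟩
  · simpa only [← hterm, norm_mul] using (summable_norm_div_one_sub hρ hr hc).mul_left _
  · calc (1 - (q : ℂ)) * ∑' l : ℕ, (q : ℂ) ^ l * (((q : ℂ) ^ l : ℂ) ^ (z - 1)) *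
            qExpE (q : ℂ) (-(q : ℂ) * (q : ℂ) ^ l)
        = (1 - (q : ℂ)) * ∑' l : ℕ, ∑' j : ℕ, c j * r j ^ l := by
          simp only [pow_mul_cpow_mul_qExpE_eq_tsum hq0, c, r]
      _ = ∑' j : ℕ, (1 - (q : ℂ)) * (c j / (1 - r j)) := by
          rw [tsum_tsum_mul_geometric hρ hr hc, tsum_mul_left]
      _ = _ := tsum_congr hterm
end

section
/- Let 0 < q < 1 be real. For every nonnegative integer j, the q-Gamma function has a simple pole at z = -j with q-residue lim_{z→-j} [z+j]_q · Γ_q(z) = (-1)^j q^{j(j+1)/2} / [j]_q!. -/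
open Filter Topology

/-- The infinite `q`-Pochhammer symbol `(a;q)_∞ = ∏_{k≥0} (1 - a q^k)`. -/
noncomputable def qPochInf (a q : ℂ) : ℂ := ∏' k : ℕ, (1 - a * q ^ k)

/-- Jackson's `q`-Gamma function `Γ_q(z) = (q;q)_∞/(q^z;q)_∞ · (1-q)^{1-z}`. -/
noncomputable def qGammaC (q : ℝ) (z : ℂ) : ℂ :=
  qPochInf (q : ℂ) (q : ℂ) / qPochInf ((q : ℂ) ^ z) (q : ℂ) * (1 - (q : ℂ)) ^ (1 - z)

/-!
Splitting off the first `j + 1` factors of `(q^z;q)_∞` exhibits the factor `1 - q^{z+j}`, which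
cancels against `[z+j]_q`. What remains is continuous at `z = -j` (the tail product is
continuous in its first argument, being a locally uniform limit of polynomials), so the residue
is its value there:
`(1-q)^j / ∏_{k<j} (1 - q^{k-j}) = (-1)^j q^{j(j+1)/2} / [j]_q!`.
-/

open Complex Finset

lemma qFact_mul_one_sub_pow {q : ℂ} (hq : q ≠ 1) (n : ℕ) :
    qFact q n * (1 - q) ^ n = ∏ m ∈ range n, (1 - q ^ (m + 1)) := by
  have h1q : 1 - q ≠ 0 := sub_ne_zero.2 hq.symm
  induction n with
  | zero => simp [qFact]
  | succ n ih =>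
    rw [qFact, prod_range_succ, ← ih, qNum]
    field_simp
    ring

lemma prod_one_sub_inv_pow_mul_pow {K : Type*} [Field K] {q : K} (hq : q ≠ 0) (n : ℕ) :
    ∏ k ∈ range n, (1 - (q ^ n)⁻¹ * q ^ k)
      = (-1) ^ n * (∏ m ∈ range n, (1 - q ^ (m + 1))) / q ^ (n * (n + 1) / 2) := by
  induction n with
  | zero => simp
  | succ n ih =>
    have htriangle : (n + 1) * (n + 1 + 1) / 2 = n * (n + 1) / 2 + (n + 1) := by
      rw [show (n + 1) * (n + 1 + 1) = n * (n + 1) + (n + 1) * 2 by ring,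
        Nat.add_mul_div_right _ _ two_pos]
    have hshift : ∀ k, 1 - (q ^ (n + 1))⁻¹ * q ^ (k + 1) = 1 - (q ^ n)⁻¹ * q ^ k := fun k => by
      field_simp
      ring
    rw [prod_range_succ', prod_range_succ, htriangle]
    simp only [hshift, ih]
    field_simp
    ring

section QPochhammer

variable {q : ℂ}

lemma summable_norm_mul_pow (hq : ‖q‖ < 1) (a : ℂ) : Summable fun k : ℕ => ‖a * q ^ k‖ := by
  simpa [norm_mul, norm_pow] using
    (summable_geometric_of_lt_one (norm_nonneg q) hq).mul_left ‖a‖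

lemma multipliable_one_sub_mul_pow (hq : ‖q‖ < 1) (a : ℂ) :
    Multipliable fun k : ℕ => 1 - a * q ^ k := by
  simpa [sub_eq_add_neg] using
    multipliable_one_add_of_summable (by simpa using summable_norm_mul_pow hq a)

lemma qPochInf_ne_zero (hq : ‖q‖ < 1) {a : ℂ} (ha : ∀ k : ℕ, 1 - a * q ^ k ≠ 0) :
    qPochInf a q ≠ 0 := by
  have h := tprod_one_add_ne_zero_of_summable (f := fun k : ℕ => -(a * q ^ k))
    (fun k => by rw [← sub_eq_add_neg]; exact ha k) (by simpa using summable_norm_mul_pow hq a)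
  simpa only [qPochInf, ← sub_eq_add_neg] using h

lemma qPochInf_eq_prod_mul (hq : ‖q‖ < 1) (a : ℂ) (n : ℕ) :
    qPochInf a q = (∏ k ∈ range n, (1 - a * q ^ k)) * qPochInf (a * q ^ n) q := by
  have hshift : (fun k : ℕ => 1 - a * q ^ n * q ^ k) = fun k => 1 - a * q ^ (k + n) := by
    ext k
    ring
  have h := multipliable_one_sub_mul_pow hq (a * q ^ n)
  rw [hshift] at h
  rw [qPochInf, qPochInf, hshift]
  exact (Multipliable.prod_mul_tprod_nat_mul' (f := fun k => 1 - a * q ^ k) h).symm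

lemma continuous_qPochInf (hq : ‖q‖ < 1) : Continuous fun a : ℂ => qPochInf a q := by
  refine continuous_iff_continuousAt.2 fun a => ?_
  set K := Metric.closedBall (0 : ℂ) (‖a‖ + 1)
  have hprod := Summable.hasProdUniformlyOn_nat_one_add (f := fun k (b : ℂ) => -(b * q ^ k))
    (isCompact_closedBall 0 _)
    ((summable_geometric_of_lt_one (norm_nonneg q) hq).mul_left (‖a‖ + 1))
    (Eventually.of_forall fun k b hb => by
      rw [norm_neg, norm_mul, norm_pow]
      gcongr
      simpa [K] using hb) fun k => by fun_prop
  have hcont : ContinuousOn (fun b : ℂ => qPochInf b q) K := by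
    simpa only [qPochInf, ← sub_eq_add_neg] using
      hprod.tendstoUniformlyOn_finsetRange.continuousOn
        (Frequently.of_forall fun n => by fun_prop)
  exact hcont.continuousAt (Metric.closedBall_mem_nhds_of_mem (by simp))

lemma one_sub_pow_succ_ne_zero (hq : ‖q‖ < 1) (m : ℕ) : 1 - q ^ (m + 1) ≠ 0 := by
  refine sub_ne_zero.2 fun h => ?_
  have := congrArg norm h
  rw [norm_one, norm_pow] at this
  exact (pow_lt_one₀ (norm_nonneg q) hq (Nat.succ_ne_zero m)).ne' this

lemma qPochInf_self_ne_zero (hq : ‖q‖ < 1) : qPochInf q q ≠ 0 :=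
  qPochInf_ne_zero hq fun k => by rw [← pow_succ']; exact one_sub_pow_succ_ne_zero hq k

end QPochhammer

section ComplexPowers

variable {q : ℂ}

lemma eventually_cpow_ne_cpow (hq0 : q ≠ 0) (hq1 : q ≠ 1) (w : ℂ) :
    ∀ᶠ z in 𝓝[≠] w, q ^ z ≠ q ^ w := by
  have hlog : log q ≠ 0 := fun h => hq1 (by rw [← exp_log hq0, h, exp_zero])
  exact (hasStrictDerivAt_const_cpow (Or.inl hq0)).hasDerivAt.eventually_ne
    (mul_ne_zero (cpow_ne_zero_iff.2 (Or.inl hq0)) hlog)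

lemma eventually_cpow_mul_pow_ne_one (hq0 : q ≠ 0) (hq1 : q ≠ 1) (j : ℕ) :
    ∀ᶠ z in 𝓝[≠] (-(j : ℂ)), q ^ z * q ^ j ≠ 1 := by
  filter_upwards [eventually_cpow_ne_cpow hq0 hq1 (-j)] with z hz h
  rw [cpow_neg, cpow_natCast] at hz
  exact hz (eq_inv_of_mul_eq_one_left h)

lemma cpow_neg_natCast_mul_pow_succ (hq0 : q ≠ 0) (j : ℕ) :
    q ^ (-(j : ℂ)) * q ^ (j + 1) = q := by
  rw [cpow_neg, cpow_natCast, pow_succ]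
  field_simp

lemma prod_one_sub_cpow_neg_natCast (hq0 : q ≠ 0) (j : ℕ) :
    ∏ k ∈ range j, (1 - q ^ (-(j : ℂ)) * q ^ k)
      = (-1) ^ j * (∏ m ∈ range j, (1 - q ^ (m + 1))) / q ^ (j * (j + 1) / 2) := by
  simp only [cpow_neg, cpow_natCast]
  exact prod_one_sub_inv_pow_mul_pow hq0 j

end ComplexPowers

/-- `[z+j]_q Γ_q(z)` with the factor `1 - q^{z+j}` of `(q^z;q)_∞` cancelled against `[z+j]_q`. -/
noncomputable def qGammaRegularPart (q : ℂ) (j : ℕ) (z : ℂ) : ℂ :=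
  qPochInf q q * (1 - q) ^ (-z) /
    ((∏ k ∈ range j, (1 - q ^ z * q ^ k)) * qPochInf (q ^ z * q ^ (j + 1)) q)

lemma qNumC_mul_qGammaC_eq {q : ℝ} (hq : ‖(q : ℂ)‖ < 1) (hq0 : q ≠ 0) {j : ℕ} {z : ℂ}
    (hz : (q : ℂ) ^ z * (q : ℂ) ^ j ≠ 1) :
    qNumC q (z + j) * qGammaC q z = qGammaRegularPart q j z := by
  have hQ0 : (q : ℂ) ≠ 0 := ofReal_ne_zero.2 hq0
  have h1q : 1 - (q : ℂ) ≠ 0 := sub_ne_zero.2 fun h => by simp [← h] at hq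
  have hz' : 1 - (q : ℂ) ^ z * (q : ℂ) ^ j ≠ 0 := sub_ne_zero.2 hz.symm
  rw [qNumC, qGammaC, qGammaRegularPart, qPochInf_eq_prod_mul hq ((q : ℂ) ^ z) (j + 1),
    prod_range_succ, cpow_add _ _ hQ0, cpow_natCast, sub_eq_add_neg (1 : ℂ) z,
    cpow_add _ _ h1q, cpow_one]
  field_simp

lemma continuousAt_qGammaRegularPart {q : ℂ} (hq : ‖q‖ < 1) (hq0 : q ≠ 0) (j : ℕ) :
    ContinuousAt (qGammaRegularPart q j) (-j) := by
  have h1q : 1 - q ≠ 0 := sub_ne_zero.2 fun h => by simp [← h] at hq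
  have hcpow : ContinuousAt (fun z : ℂ => q ^ z) (-j) := continuousAt_const_cpow hq0
  have hden : (∏ k ∈ range j, (1 - q ^ (-(j : ℂ)) * q ^ k)) *
      qPochInf (q ^ (-(j : ℂ)) * q ^ (j + 1)) q ≠ 0 := by
    rw [prod_one_sub_cpow_neg_natCast hq0, cpow_neg_natCast_mul_pow_succ hq0]
    refine mul_ne_zero (div_ne_zero (mul_ne_zero (by simp) ?_) (pow_ne_zero _ hq0))
      (qPochInf_self_ne_zero hq)
    exact prod_ne_zero_iff.2 fun m _ => one_sub_pow_succ_ne_zero hq m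
  refine ContinuousAt.div ?_ (ContinuousAt.mul ?_ ?_) hden
  · exact continuousAt_const.mul ((continuousAt_const_cpow h1q).comp continuousAt_neg)
  · exact tendsto_finsetProd _ fun k _ => continuousAt_const.sub (hcpow.mul continuousAt_const)
  · exact (continuous_qPochInf hq).continuousAt.comp (hcpow.mul continuousAt_const)

lemma qGammaRegularPart_neg_natCast {q : ℂ} (hq : ‖q‖ < 1) (hq0 : q ≠ 0) (j : ℕ) :
    qGammaRegularPart q j (-j) = (-1) ^ j * q ^ (j * (j + 1) / 2) / qFact q j := by
  have hq1 : q ≠ 1 := fun h => by simp [h] at hq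
  have h1q : (1 - q) ^ j ≠ 0 := pow_ne_zero _ (sub_ne_zero.2 hq1.symm)
  have hqq := qPochInf_self_ne_zero hq
  rw [qGammaRegularPart, prod_one_sub_cpow_neg_natCast hq0, cpow_neg_natCast_mul_pow_succ hq0,
    neg_neg, cpow_natCast, ← qFact_mul_one_sub_pow hq1]
  field_simp
  rw [← pow_mul, mul_comm, pow_mul, neg_one_sq, one_pow]

/-- For every `j ∈ ℕ`, the `q`-Gamma function has a simple pole at `z = -j` with
`q`-residue `lim_{z→-j} [z+j]_q Γ_q(z) = (-1)^j q^{j(j+1)/2}/[j]_q!`. -/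
theorem qGamma_qResidue (q : ℝ) (hq : q ∈ Set.Ioo (0 : ℝ) 1) (j : ℕ) :
    Filter.Tendsto (fun z : ℂ => qNumC (q : ℂ) (z + (j : ℂ)) * qGammaC q z)
      (𝓝[≠] (-(j : ℂ)))
      (𝓝 ((-1 : ℂ) ^ j * (q : ℂ) ^ (j * (j + 1) / 2) / qFact (q : ℂ) j)) := by
  obtain ⟨hq0, hq1⟩ := hq
  have hQ : ‖(q : ℂ)‖ < 1 := by rwa [norm_real, Real.norm_of_nonneg hq0.le]
  have hQ0 : (q : ℂ) ≠ 0 := ofReal_ne_zero.2 hq0.ne'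
  have hQ1 : (q : ℂ) ≠ 1 := by exact_mod_cast hq1.ne
  rw [← qGammaRegularPart_neg_natCast hQ hQ0 j]
  exact ((continuousAt_qGammaRegularPart hQ hQ0 j).tendsto.mono_left nhdsWithin_le_nhds).congr'
    ((eventually_cpow_mul_pow_ne_one hQ0 hQ1 j).mono fun z hz =>
      (qNumC_mul_qGammaC_eq hQ hq0.ne' hz).symm)
end

section
/- Let f : ℝ → ℝ (or ℝ → ℂ) be differentiable at x and at -x, with x ≠ 0, and continuous in a neighborhood of ±x. Then Rubin's q-differential operator converges to the ordinary derivative: lim_{q→1⁻} ∂_q(f)(x) = f′(x). -/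
/-!
With `v = (1 - q)x` we have `q⁻¹x = x + q⁻¹v`, `qx = x - v`, `-q⁻¹x = -x - q⁻¹v` and
`-qx = -x + v`. Regrouping the numerator around `f x` and `f (-x)` turns the operator into half a
sum of four difference quotients `(f (a + r v) - f a) / v` with `a = ±x` and `r → ±1`; these tend
to `f'(x) + f'(x) - f'(-x) + f'(-x)`, so the contributions at `-x` cancel.
-/

open Filter Topology Asymptotics

theorem HasDerivAt.tendsto_sub_div_of_tendsto {𝕜 : Type*} [NontriviallyNormedField 𝕜]
    {α : Type*} {l : Filter α} {f : 𝕜 → 𝕜} {f' a c : 𝕜} {r v : α → 𝕜}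
    (hf : HasDerivAt f f' a) (hv : Tendsto v l (𝓝[≠] 0)) (hr : Tendsto r l (𝓝 c)) :
    Tendsto (fun q => (f (a + r q * v q) - f a) / v q) l (𝓝 (c * f')) := by
  obtain ⟨hv0, hv_ne⟩ := tendsto_nhdsWithin_iff.mp hv
  have hrv : Tendsto (fun q => a + r q * v q) l (𝓝 a) := by
    simpa using tendsto_const_nhds.add (hr.mul hv0)
  have hrem : (fun q => f (a + r q * v q) - f a - r q * v q * f') =o[l] v := by
    have hO : (fun q => r q * v q) =O[l] v := by
      simpa using (hr.isBigO_one 𝕜).mul (isBigO_refl v l)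
    simpa [Function.comp_def] using (hf.isLittleO.comp_tendsto hrv).trans_isBigO
      (by simpa [Function.comp_def] using hO)
  refine (hrem.tendsto_div_nhds_zero.add (hr.mul_const f')).congr' ?_ |>.trans ?_
  · filter_upwards [hv_ne] with q (hq : v q ≠ 0)
    field_simp
    ring
  · simp

theorem tendsto_one_sub_mul_nhdsNE {x : ℝ} (hx : x ≠ 0) :
    Tendsto (fun q : ℝ => (1 - q) * x) (𝓝[≠] 1) (𝓝[≠] 0) := by
  refine tendsto_nhdsWithin_iff.mpr ⟨?_, ?_⟩
  · exact (((continuous_const.sub continuous_id).mul continuous_const).tendsto' 1 0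
      (by simp)).mono_left nhdsWithin_le_nhds
  · filter_upwards [self_mem_nhdsWithin] with q (hq : q ≠ 1)
    exact mul_ne_zero (sub_ne_zero.mpr hq.symm) hx

theorem rubin_qDeriv_tendsto_deriv_general (f : ℝ → ℝ) (x : ℝ) (hx : x ≠ 0)
    (hfx : DifferentiableAt ℝ f x) (hfnx : DifferentiableAt ℝ f (-x)) :
    Filter.Tendsto
      (fun q : ℝ =>
        (f (q⁻¹ * x) + f (-(q⁻¹ * x)) - f (q * x) + f (-(q * x)) - 2 * f (-x)) /
          (2 * (1 - q) * x))
      (𝓝[<] (1 : ℝ)) (𝓝 (deriv f x)) := by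
  have hv := (tendsto_one_sub_mul_nhdsNE hx).mono_left (nhdsLT_le_nhdsNE 1)
  have hinv : Tendsto (fun q : ℝ => q⁻¹) (𝓝[<] 1) (𝓝 1) := by
    simpa using (tendsto_inv₀ one_ne_zero).mono_left (nhdsWithin_le_nhds (s := Set.Iio (1:ℝ)))
  have hfx' := hfx.hasDerivAt
  have hfnx' := hfnx.hasDerivAt
  have hlim := ((((hfx'.tendsto_sub_div_of_tendsto hv hinv).sub
    (hfx'.tendsto_sub_div_of_tendsto hv (tendsto_const_nhds (x := -1)))).add
    (hfnx'.tendsto_sub_div_of_tendsto hv hinv.neg)).add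
    (hfnx'.tendsto_sub_div_of_tendsto hv (tendsto_const_nhds (x := 1)))).div_const 2
  rw [show (1 * deriv f x - -1 * deriv f x + -1 * deriv f (-x) + 1 * deriv f (-x)) / 2
    = deriv f x by ring] at hlim
  refine hlim.congr' ?_
  filter_upwards [Ioo_mem_nhdsLT (show (0:ℝ) < 1 by norm_num)] with q ⟨hq_pos, hq_lt_one⟩
  rw [show x + q⁻¹ * ((1 - q) * x) = q⁻¹ * x by field_simp; ring,
    show x + -1 * ((1 - q) * x) = q * x by ring,
    show -x + -q⁻¹ * ((1 - q) * x) = -(q⁻¹ * x) by field_simp; ring,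
    show -x + 1 * ((1 - q) * x) = -(q * x) by ring]
  field_simp
  ring

/-- If `f` is differentiable at `x` and at `-x` (`x ≠ 0`) and continuous in a
neighborhood of `x` and of `-x`, then Rubin's `q`-differential operator
`∂_q(f)(x) = [f(q⁻¹x) + f(-q⁻¹x) - f(qx) + f(-qx) - 2f(-x)]/(2(1-q)x)`
converges to the ordinary derivative `f′(x)` as `q → 1⁻`. -/
theorem rubin_qDeriv_tendsto_deriv (f : ℝ → ℝ) (x : ℝ) (hx : x ≠ 0)
    (hfx : DifferentiableAt ℝ f x) (hfnx : DifferentiableAt ℝ f (-x))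
    (hcx : ∀ᶠ y in 𝓝 x, ContinuousAt f y)
    (hcnx : ∀ᶠ y in 𝓝 (-x), ContinuousAt f y) :
    Filter.Tendsto
      (fun q : ℝ =>
        (f (q⁻¹ * x) + f (-(q⁻¹ * x)) - f (q * x) + f (-(q * x)) - 2 * f (-x)) /
          (2 * (1 - q) * x))
      (𝓝[<] (1 : ℝ)) (𝓝 (deriv f x)) :=
  rubin_qDeriv_tendsto_deriv_general f x hx hfx hfnx
end
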